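/- arXiv:2111.08368 — 2 statements merged into one kernel-verified Lean document; each statement's English description precedes it below -/
import Mathlib

section
/- Let d ≥ 1 and let f = (f1,f2) : ℂ² → ℂ² be a polynomial map whose components have degree d and whose leading homogeneous parts ĥf1, ĥf2 (the degree-d homogeneous components) have no common zero in ℂ² other than the origin. Then the monomials w^α (α ∈ ℕ²) are linearly independent as functions on the graph V = {(w,z) : w = f(z)}; equivalently, if p ∈ ℂ[w1,w2] satisfies p(f1(z), f2(z)) = 0 for all z ∈ ℂ², then p = 0. In particular the ℂ-algebra homomorphism ℂ[w1,w2] → ℂ[z1,z2], p(w) ↦ p(f(z)), is injective. -/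
/-!
Write `m` for the total degree of a nonzero `p` and `p_m` for its top homogeneous component, and
let `H₁, H₂` be the degree-`d` components of `f₁, f₂`. Comparing the homogeneous components of
degree `m d` in `p(f₁, f₂) = 0` gives the identity of polynomials `p_m(H₁, H₂) = 0`; this is most
easily seen through `t ↦ q(t z)`, a polynomial in `t` whose coefficients are the homogeneous
components of `q`.

Regularity rules this out. Every binary form of positive degree over `ℂ` has a nontrivial zero,
so there is a `z₀ ≠ 0` with `H₁(z₀) = 0`, hence `H₂(z₀) ≠ 0`, and `H₁ ≠ 0`. Evaluating
`∑ c_j H₁^j H₂^(m-j) = 0` at `z₀` gives `c₀ = 0`; then `H₁` can be cancelled in the domain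
`ℂ[z₁, z₂]`, and induction on `m` kills every coefficient of `p_m`.
-/

noncomputable section

/-- Evaluation of a 2-variable polynomial at a point of `ℂ²`. -/
def pev (p : MvPolynomial (Fin 2) ℂ) (z : ℂ × ℂ) : ℂ :=
  MvPolynomial.eval ![z.1, z.2] p

/-- The coefficient of `z1^j z2^(d-j)` in `p`. -/
def coeffTop (d : ℕ) (p : MvPolynomial (Fin 2) ℂ) (j : ℕ) : ℂ :=
  MvPolynomial.coeff (Finsupp.single (0 : Fin 2) j + Finsupp.single (1 : Fin 2) (d - j)) p

/-- The degree-`d` homogeneous part of `p`, as a function on `ℂ²`. -/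
def leadPart (d : ℕ) (p : MvPolynomial (Fin 2) ℂ) (z : ℂ × ℂ) : ℂ :=
  ∑ j ∈ Finset.range (d + 1), coeffTop d p j * z.1 ^ j * z.2 ^ (d - j)

open MvPolynomial Finset

namespace Finsupp

variable {σ M : Type*} [CommMonoid M]

theorem prod_pow_eq_prod_map_toMultiset (g : σ → M) (s : σ →₀ ℕ) :
    (s.prod fun i e => g i ^ e) = (s.toMultiset.map g).prod := by
  rw [toMultiset_map, prod_toMultiset,
    prod_mapDomain_index (fun _ => pow_zero _) (fun _ _ _ => pow_add _ _ _)]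

theorem card_toMultiset_eq_degree (s : σ →₀ ℕ) : Multiset.card s.toMultiset = s.degree := by
  simp only [card_toMultiset, Finsupp.sum, id]
  rfl

theorem eq_single_zero_add_single_one (s : Fin 2 →₀ ℕ) : s = single 0 (s 0) + single 1 (s 1) := by
  ext i
  fin_cases i <;> simp

end Finsupp

namespace Polynomial

variable {σ A : Type*} [CommSemiring A] {g : σ → A[X]} {d : ℕ}

theorem natDegree_finsuppProd_pow_le (hg : ∀ i, (g i).natDegree ≤ d) (s : σ →₀ ℕ) :
    (s.prod fun i e => g i ^ e).natDegree ≤ s.degree * d := by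
  rw [Finsupp.prod_pow_eq_prod_map_toMultiset, ← Finsupp.card_toMultiset_eq_degree]
  refine (natDegree_multiset_prod_le _).trans ?_
  simpa [Multiset.map_map] using
    Multiset.sum_le_card_nsmul ((s.toMultiset.map g).map natDegree) d (by simp [hg])

theorem coeff_finsuppProd_pow_of_natDegree_le (hg : ∀ i, (g i).natDegree ≤ d) (s : σ →₀ ℕ) :
    (s.prod fun i e => g i ^ e).coeff (s.degree * d) = s.prod fun i e => (g i).coeff d ^ e := by
  rw [Finsupp.prod_pow_eq_prod_map_toMultiset, Finsupp.prod_pow_eq_prod_map_toMultiset,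
    ← Finsupp.card_toMultiset_eq_degree, ← Multiset.card_map g,
    coeff_multiset_prod_of_natDegree_le _ _ (by simp [hg]), Multiset.map_map]
  rfl

end Polynomial

namespace MvPolynomial

variable {σ K A : Type*} [CommSemiring K] [CommSemiring A] [Algebra K A]

open Polynomial in
theorem coeff_aeval_mul_of_natDegree_le (p : MvPolynomial σ K) {g : σ → A[X]} {m d : ℕ}
    (hd : 0 < d) (hg : ∀ i, (g i).natDegree ≤ d) (hp : p.totalDegree ≤ m) :
    (aeval g p).coeff (m * d) = aeval (fun i => (g i).coeff d) (homogeneousComponent m p) := by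
  classical
  conv_lhs => rw [p.as_sum]
  rw [map_sum, finsetSum_coeff, homogeneousComponent_apply, map_sum, sum_filter]
  refine sum_congr rfl fun s hs => ?_
  have hsm : s.degree ≤ m := (le_totalDegree hs).trans hp
  rw [aeval_monomial, aeval_monomial, Polynomial.algebraMap_apply, Polynomial.coeff_C_mul]
  split_ifs with h
  · rw [← h, coeff_finsuppProd_pow_of_natDegree_le hg]
  · refine mul_eq_zero_of_right _ (coeff_eq_zero_of_natDegree_lt ?_)
    exact (natDegree_finsuppProd_pow_le hg s).trans_lt
      (Nat.mul_lt_mul_of_pos_right (lt_of_le_of_ne hsm h) hd)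

variable {R : Type*} [CommSemiring R]

/-- `q(t • x)`, as a polynomial in `t`. -/
def scaleVars : MvPolynomial σ R →ₐ[R] Polynomial (MvPolynomial σ R) :=
  aeval fun i => Polynomial.C (X i) * Polynomial.X

theorem scaleVars_monomial (s : σ →₀ ℕ) (c : R) :
    scaleVars (monomial s c) = Polynomial.C (monomial s c) * Polynomial.X ^ s.degree := by
  rw [scaleVars, aeval_monomial, monomial_eq, map_mul, map_finsuppProd]
  simp only [mul_pow, Finsupp.prod_mul, map_pow, Polynomial.algebraMap_apply, algebraMap_eq]
  rw [mul_assoc]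
  congr 2
  exact prod_pow_eq_pow_sum _ _ _

theorem coeff_scaleVars (q : MvPolynomial σ R) (n : ℕ) :
    (scaleVars q).coeff n = homogeneousComponent n q := by
  induction q using MvPolynomial.induction_on' with
  | monomial s c =>
    rw [scaleVars_monomial, Polynomial.coeff_C_mul_X_pow,
      homogeneousComponent_of_mem (isHomogeneous_monomial c rfl)]
  | add q r hq hr => rw [map_add, Polynomial.coeff_add, hq, hr, map_add]

theorem natDegree_scaleVars_le (q : MvPolynomial σ R) :
    (scaleVars q).natDegree ≤ q.totalDegree :=
  Polynomial.natDegree_le_iff_coeff_eq_zero.2 fun _ hn => by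
    rw [coeff_scaleVars, homogeneousComponent_eq_zero _ _ hn]

theorem homogeneousComponent_bind₁_of_totalDegree_le {τ : Type*} {f : σ → MvPolynomial τ R}
    {p : MvPolynomial σ R} {m d : ℕ} (hd : 0 < d) (hf : ∀ i, (f i).totalDegree ≤ d)
    (hp : p.totalDegree ≤ m) :
    homogeneousComponent (m * d) (bind₁ f p) =
      bind₁ (fun i => homogeneousComponent d (f i)) (homogeneousComponent m p) := by
  rw [← coeff_scaleVars, ← aeval_eq_bind₁, ← AlgHom.comp_apply, comp_aeval,
    coeff_aeval_mul_of_natDegree_le p hd (fun i => (natDegree_scaleVars_le _).trans (hf i)) hp]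
  simp only [coeff_scaleVars, aeval_eq_bind₁]

theorem linearIndependent_monomials_of_injective_aeval {R B : Type*} [CommRing R]
    [CommRing B] [Algebra R B] {x : σ → B} (hx : Function.Injective (aeval (R := R) x)) :
    LinearIndependent R fun s : σ →₀ ℕ => s.prod fun i e => x i ^ e := by
  simpa [Function.comp_def, aeval_monomial] using
    (basisMonomials σ R).linearIndependent.map' (aeval x).toLinearMap (LinearMap.ker_eq_bot.2 hx)

end MvPolynomial

section BinaryForm

variable {K A : Type*}

def binaryForm [CommSemiring K] [CommSemiring A] [Algebra K A] (n : ℕ) (c : ℕ → K) (a b : A) :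
    A :=
  ∑ j ∈ range (n + 1), c j • (a ^ j * b ^ (n - j))

theorem binaryForm_succ [CommSemiring K] [CommSemiring A] [Algebra K A] (n : ℕ) (c : ℕ → K)
    (a b : A) :
    binaryForm (n + 1) c a b = a * binaryForm n (fun j => c (j + 1)) a b + c 0 • b ^ (n + 1) := by
  rw [binaryForm, sum_range_succ', binaryForm, mul_sum]
  congr 1
  · refine sum_congr rfl fun j _ => ?_
    rw [mul_smul_comm, Nat.add_sub_add_right, pow_succ', mul_assoc]
  · simp

theorem map_binaryForm_of_map_eq_zero [CommSemiring K] [CommSemiring A] [Algebra K A] (φ : A →ₐ[K] K)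
    {a : A} (ha : φ a = 0) (n : ℕ) (c : ℕ → K) (b : A) :
    φ (binaryForm n c a b) = c 0 * φ b ^ n := by
  cases n with
  | zero => simp [binaryForm]
  | succ n => simp [binaryForm_succ, ha]

theorem eq_zero_of_binaryForm_eq_zero [CommSemiring K] [NoZeroDivisors K] [CommSemiring A]
    [NoZeroDivisors A] [Algebra K A] (φ : A →ₐ[K] K) {a b : A} (ha : a ≠ 0) (hφa : φ a = 0) (hφb : φ b ≠ 0)
    {n : ℕ} {c : ℕ → K} (h : binaryForm n c a b = 0) : ∀ j ≤ n, c j = 0 := by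
  have hc0 : ∀ {n : ℕ} {c : ℕ → K}, binaryForm n c a b = 0 → c 0 = 0 := fun h => by
    have := congrArg φ h
    rw [map_binaryForm_of_map_eq_zero φ hφa, map_zero] at this
    exact (mul_eq_zero.1 this).resolve_right (pow_ne_zero _ hφb)
  induction n generalizing c with
  | zero =>
    intro j hj
    rw [Nat.le_zero.1 hj]
    exact hc0 h
  | succ n ih =>
    have h0 := hc0 h
    rw [binaryForm_succ, h0, zero_smul, add_zero] at h
    have htail := ih ((mul_eq_zero.1 h).resolve_left ha)
    rintro (_ | j) hj
    · exact h0
    · exact htail j (by omega)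

theorem exists_ne_zero_binaryForm_eq_zero [Field K] [IsAlgClosed K] (c : ℕ → K) {n : ℕ}
    (hn : 0 < n) : ∃ z : K × K, z ≠ 0 ∧ binaryForm n c z.1 z.2 = 0 := by
  by_cases hcn : c n = 0
  · refine ⟨(1, 0), by simp, ?_⟩
    rw [binaryForm, sum_eq_single n (fun j hj hjn => ?_) (by simp)]
    · simp [hcn]
    · have : n - j ≠ 0 := by have := mem_range.1 hj; omega
      simp [zero_pow this]
  · set Q : Polynomial K := ∑ j ∈ range (n + 1), Polynomial.C (c j) * Polynomial.X ^ j
    have hQn : Q.coeff n = c n := by simp [Q, Polynomial.finsetSum_coeff]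
    have hQ : Q.degree ≠ 0 := fun h0 => by
      have := Polynomial.le_degree_of_ne_zero (hQn.symm ▸ hcn : Q.coeff n ≠ 0)
      rw [h0] at this
      have : n ≤ 0 := by exact_mod_cast this
      omega
    obtain ⟨r, hr⟩ := IsAlgClosed.exists_root Q hQ
    refine ⟨(r, 1), by simp, ?_⟩
    simpa [binaryForm, Q, Polynomial.eval_finsetSum] using hr

end BinaryForm

theorem homogeneousComponent_eq_sum_range (q : MvPolynomial (Fin 2) ℂ) (n : ℕ) :
    homogeneousComponent n q = ∑ j ∈ range (n + 1),
      monomial (Finsupp.single 0 j + Finsupp.single 1 (n - j)) (coeffTop n q j) := by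
  ext s
  rw [coeff_homogeneousComponent, coeff_sum]
  simp only [coeff_monomial]
  have hdeg : s.degree = s 0 + s 1 := by rw [Finsupp.degree_eq_sum, Fin.sum_univ_two]
  split_ifs with hs
  · rw [sum_eq_single (s 0)]
    · rw [if_pos, coeffTop]
      all_goals rw [show n - s 0 = s 1 by omega, ← Finsupp.eq_single_zero_add_single_one]
    · intro j _ hj
      rw [if_neg]
      rintro rfl
      simp at hj
    · intro h
      exact absurd (mem_range.2 (by omega : s 0 < n + 1)) h
  · refine (sum_eq_zero fun j hj => ?_).symm
    rw [if_neg]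
    rintro rfl
    have := mem_range.1 hj
    apply hs
    rw [hdeg]
    simp
    omega

theorem aeval_homogeneousComponent_eq_binaryForm {A : Type*} [CommSemiring A] [Algebra ℂ A]
    (q : MvPolynomial (Fin 2) ℂ) (n : ℕ) (a b : A) :
    aeval ![a, b] (homogeneousComponent n q) = binaryForm n (coeffTop n q) a b := by
  rw [homogeneousComponent_eq_sum_range, map_sum]
  refine sum_congr rfl fun j _ => ?_
  rw [aeval_monomial, Finsupp.prod_add_index' (fun _ => pow_zero _) (fun _ _ _ => pow_add _ _ _)]
  simp [Algebra.smul_def]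

theorem leadPart_eq_binaryForm (d : ℕ) (f : MvPolynomial (Fin 2) ℂ) (z : ℂ × ℂ) :
    leadPart d f z = binaryForm d (coeffTop d f) z.1 z.2 := by
  simp [leadPart, binaryForm, mul_assoc]

theorem leadPart_eq_eval (d : ℕ) (f : MvPolynomial (Fin 2) ℂ) (z : ℂ × ℂ) :
    leadPart d f z = eval ![z.1, z.2] (homogeneousComponent d f) := by
  rw [leadPart_eq_binaryForm, ← aeval_homogeneousComponent_eq_binaryForm]
  rfl

theorem exists_ne_zero_leadPart_eq_zero {d : ℕ} (hd : 0 < d) (f : MvPolynomial (Fin 2) ℂ) :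
    ∃ z : ℂ × ℂ, z ≠ 0 ∧ leadPart d f z = 0 := by
  simpa only [leadPart_eq_binaryForm] using exists_ne_zero_binaryForm_eq_zero (coeffTop d f) hd

theorem exists_coeffTop_totalDegree_ne_zero {p : MvPolynomial (Fin 2) ℂ} (hp : p ≠ 0) :
    ∃ j ≤ p.totalDegree, coeffTop p.totalDegree p j ≠ 0 := by
  obtain ⟨s, hs, hdeg⟩ := p.support.exists_mem_eq_sup (support_nonempty.2 hp)
    fun s => s.sum fun _ e => e
  have hdeg' : p.totalDegree = s 0 + s 1 := by
    rw [totalDegree, hdeg, Finsupp.sum_fintype _ _ fun _ => rfl, Fin.sum_univ_two]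
  refine ⟨s 0, by omega, ?_⟩
  rwa [coeffTop, show p.totalDegree - s 0 = s 1 by omega,
    ← Finsupp.eq_single_zero_add_single_one, ← mem_support_iff]

theorem bind₁_injective_of_leadPart_regular {d : ℕ} (hd : 0 < d) {f1 f2 : MvPolynomial (Fin 2) ℂ}
    (hf1 : f1.totalDegree ≤ d) (hf2 : f2.totalDegree ≤ d)
    (hreg : ∀ z : ℂ × ℂ, leadPart d f1 z = 0 → leadPart d f2 z = 0 → z = 0) :
    Function.Injective (bind₁ ![f1, f2]) := by
  obtain ⟨z, hz, hz1⟩ := exists_ne_zero_leadPart_eq_zero hd f1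
  have hz2 : leadPart d f2 z ≠ 0 := fun h => hz (hreg z hz1 h)
  have hH1 : homogeneousComponent d f1 ≠ 0 := fun h => by
    obtain ⟨w, hw, hw2⟩ := exists_ne_zero_leadPart_eq_zero hd f2
    exact hw (hreg w (by rw [leadPart_eq_eval, h, map_zero]) hw2)
  refine (injective_iff_map_eq_zero _).2 fun p hp => by_contra fun hp0 => ?_
  obtain ⟨j, hj, hcj⟩ := exists_coeffTop_totalDegree_ne_zero hp0
  have hH : (fun i => homogeneousComponent d (![f1, f2] i)) =
      ![homogeneousComponent d f1, homogeneousComponent d f2] := by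
    ext1 i
    fin_cases i <;> rfl
  have hform : binaryForm p.totalDegree (coeffTop p.totalDegree p)
      (homogeneousComponent d f1) (homogeneousComponent d f2) = 0 := by
    rw [← aeval_homogeneousComponent_eq_binaryForm, aeval_eq_bind₁, ← hH,
      ← homogeneousComponent_bind₁_of_totalDegree_le hd (Fin.forall_fin_two.2 ⟨hf1, hf2⟩) le_rfl,
      hp, map_zero]
  refine hcj (eq_zero_of_binaryForm_eq_zero (aeval ![z.1, z.2]) hH1 ?_ ?_ hform j hj)
  · rwa [leadPart_eq_eval] at hz1
  · rwa [leadPart_eq_eval] at hz2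

theorem pev_bind₁ (f1 f2 p : MvPolynomial (Fin 2) ℂ) (z : ℂ × ℂ) :
    pev (bind₁ ![f1, f2] p) z = eval ![pev f1 z, pev f2 z] p := by
  change aeval ![z.1, z.2] (bind₁ ![f1, f2] p) = aeval ![pev f1 z, pev f2 z] p
  have hf : (fun i => aeval ![z.1, z.2] (![f1, f2] i)) = ![pev f1 z, pev f2 z] := by
    ext1 i
    fin_cases i <;> rfl
  rw [aeval_bind₁, hf]

theorem aeval_pev_apply (f1 f2 p : MvPolynomial (Fin 2) ℂ) (z : ℂ × ℂ) :
    aeval ![pev f1, pev f2] p z = eval ![pev f1 z, pev f2 z] p := by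
  change Pi.evalAlgHom ℂ (fun _ => ℂ) z (aeval _ p) = aeval _ p
  rw [← AlgHom.comp_apply, comp_aeval]
  congr 2
  ext1 i
  fin_cases i <;> rfl

theorem pev_injective : Function.Injective pev := fun p q h =>
  MvPolynomial.funext fun x => by
    have hx : ![x 0, x 1] = x := by
      ext1 i
      fin_cases i <;> rfl
    simpa only [pev, hx] using congrFun h (x 0, x 1)

theorem eq_zero_of_forall_eval_pev_eq_zero {f1 f2 : MvPolynomial (Fin 2) ℂ}
    (hinj : Function.Injective (bind₁ ![f1, f2])) (p : MvPolynomial (Fin 2) ℂ)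
    (hp : ∀ z : ℂ × ℂ, eval ![pev f1 z, pev f2 z] p = 0) : p = 0 :=
  hinj <| pev_injective <| funext fun z => by rw [pev_bind₁, hp, map_zero, pev, map_zero]

theorem linearIndependent_pev_monomials {f1 f2 : MvPolynomial (Fin 2) ℂ}
    (hvanish : ∀ p : MvPolynomial (Fin 2) ℂ,
      (∀ z : ℂ × ℂ, eval ![pev f1 z, pev f2 z] p = 0) → p = 0) :
    LinearIndependent ℂ fun α : ℕ × ℕ => fun z : ℂ × ℂ => pev f1 z ^ α.1 * pev f2 z ^ α.2 := by
  have hx : Function.Injective (aeval (R := ℂ) ![pev f1, pev f2]) :=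
    (injective_iff_map_eq_zero _).2 fun p hp => hvanish p fun z => by
      rw [← aeval_pev_apply, hp, Pi.zero_apply]
  have hα : Function.Injective fun α : ℕ × ℕ =>
      Finsupp.single (0 : Fin 2) α.1 + Finsupp.single 1 α.2 :=
    fun α β h => Prod.ext (by simpa using congrArg (· 0) h) (by simpa using congrArg (· 1) h)
  have hfam : (fun α : ℕ × ℕ => fun z : ℂ × ℂ => pev f1 z ^ α.1 * pev f2 z ^ α.2) =
      (fun s : Fin 2 →₀ ℕ => s.prod fun i e => ![pev f1, pev f2] i ^ e) ∘
        fun α => Finsupp.single 0 α.1 + Finsupp.single 1 α.2 := by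
    ext α z
    simp
  rw [hfam]
  exact (linearIndependent_monomials_of_injective_aeval hx).comp _ hα

/-- If `f = (f1, f2)` is a regular polynomial map of degree `d ≥ 1`, then the monomials
`w^α` are linearly independent as functions on the graph `V = {(w,z) : w = f(z)}`;
equivalently, `p(f1(z), f2(z)) = 0` for all `z` implies `p = 0`; in particular the
`ℂ`-algebra homomorphism `ℂ[w1,w2] → ℂ[z1,z2]`, `p(w) ↦ p(f(z))`, is injective. -/
theorem monomials_in_w_linearIndependent (d : ℕ) (hd : 1 ≤ d)
    (f1 f2 : MvPolynomial (Fin 2) ℂ)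
    (hdeg1 : f1.totalDegree = d) (hdeg2 : f2.totalDegree = d)
    (hreg : ∀ z : ℂ × ℂ, leadPart d f1 z = 0 → leadPart d f2 z = 0 → z = 0) :
    LinearIndependent ℂ
        (fun α : ℕ × ℕ => fun z : ℂ × ℂ => pev f1 z ^ α.1 * pev f2 z ^ α.2) ∧
      (∀ p : MvPolynomial (Fin 2) ℂ,
        (∀ z : ℂ × ℂ, MvPolynomial.eval ![pev f1 z, pev f2 z] p = 0) → p = 0) ∧
      Function.Injective
        (fun p : MvPolynomial (Fin 2) ℂ => MvPolynomial.bind₁ ![f1, f2] p) := by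
  have hinj := bind₁_injective_of_leadPart_regular hd hdeg1.le hdeg2.le hreg
  have hvanish := eq_zero_of_forall_eval_pev_eq_zero hinj
  exact ⟨linearIndependent_pev_monomials hvanish, hvanish, hinj⟩
end
end

section
/- Let X be a topological space, let e_1, …, e_n : X → ℂ be continuous functions, and let K ⊂ X be a nonempty compact set. For 1 ≤ m ≤ n define Van_m(K) = max{|det[e_i(ζ_j)]_{i,j=1}^m| : ζ_1, …, ζ_m ∈ K}, and define the Chebyshev-type constant t_n(K) = inf{‖e_n + q‖_K : q ∈ span_ℂ(e_1, …, e_{n−1})}, where ‖u‖_K = sup_{ζ∈K}|u(ζ)|. If Van_{n−1}(K) > 0, then t_n(K) · Van_{n−1}(K) ≤ Van_n(K) ≤ n · t_n(K) · Van_{n−1}(K). -/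
/-! If `p = e_n + q` is any monic combination, adding to the last row of `[e_i(ζ_j)]`
the combination `q` of the other rows turns it into `(p(ζ_j))_j`; expanding
along that row gives `|det| ≤ n ‖p‖_K Van_{n-1}(K)`. Conversely, at an extremal `(n-1)`-tuple
`ζ` the determinant `det[e_i(ζ_j)]` is nonzero, so some monic `p` vanishes at every `ζ_j`, and
then `det[e_i(ζ, z)] = p(z) det[e_i(ζ_j)]`, whence
`t_n Van_{n-1}(K) ≤ ‖p‖_K Van_{n-1}(K) ≤ Van_n(K)`. -/

noncomputable section

/-- `Van_m(K)` for a family of functions `e 0, e 1, …` : the supremum of the moduli of the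
`m × m` Vandermonde-type determinants `det [e i (ζ j)]` with `ζ_j ∈ K`. -/
def vanFam {X : Type*} (e : ℕ → X → ℂ) (K : Set X) (m : ℕ) : ℝ :=
  sSup {x | ∃ ζ : Fin m → X, (∀ i, ζ i ∈ K) ∧
    x = ‖Matrix.det (Matrix.of fun i j : Fin m => e (i : ℕ) (ζ j))‖}

/-- The Chebyshev-type constant `t_n(K) = inf ‖e_n + q‖_K`, `q ∈ span(e_1, …, e_{n-1})`
(here the functions are indexed `e 0, …, e (n-1)`). -/
def chebFam {X : Type*} (e : ℕ → X → ℂ) (K : Set X) (n : ℕ) : ℝ :=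
  sInf {x | ∃ c : ℕ → ℂ,
    x = sSup {y | ∃ ζ ∈ K,
      y = ‖e (n - 1) ζ + ∑ i ∈ Finset.range (n - 1), c i * e i ζ‖}}

section VandermondeChebyshev

open Finset Matrix

variable {X : Type*}

def vanMatrix {R : Type*} {m : ℕ} (e : ℕ → X → R) (ζ : Fin m → X) : Matrix (Fin m) (Fin m) R :=
  Matrix.of fun i j => e i (ζ j)

def monicComb {R : Type*} [CommRing R] (e : ℕ → X → R) (m : ℕ) (c : ℕ → R) (z : X) : R :=
  e m z + ∑ i ∈ range m, c i * e i z

def supNormOn {E : Type*} [Norm E] (K : Set X) (p : X → E) : ℝ :=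
  sSup {y | ∃ ζ ∈ K, y = ‖p ζ‖}

section Algebra

variable {R : Type*} [CommRing R] {m : ℕ}

theorem det_vanMatrix_eq_sum_monicComb (e : ℕ → X → R) (c : ℕ → R) (ζ : Fin (m + 1) → X) :
    (vanMatrix e ζ).det = ∑ j : Fin (m + 1),
      (-1) ^ (m + (j : ℕ)) * monicComb e m c (ζ j) * (vanMatrix e (ζ ∘ j.succAbove)).det := by
  set c' : Fin (m + 1) → R := Fin.snoc (fun i : Fin m => c i) 1
  have hrow : ∑ k, c' k • vanMatrix e ζ k = fun j => monicComb e m c (ζ j) := by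
    funext j
    simp [c', vanMatrix, monicComb, Fin.sum_univ_castSucc, ← Fin.sum_univ_eq_sum_range, add_comm]
  have hdet := det_updateRow_sum (vanMatrix e ζ) (Fin.last m) c'
  rw [hrow, show c' (Fin.last m) = 1 from Fin.snoc_last _ _, one_smul] at hdet
  rw [← hdet, det_succ_row _ (Fin.last m)]
  refine sum_congr rfl fun j _ => ?_
  congr 2
  · simp
  · ext i' j'
    simp [vanMatrix, Fin.succAbove_last]

theorem det_vanMatrix_snoc {e : ℕ → X → R} {c : ℕ → R} {ζ : Fin m → X}
    (hc : ∀ j, monicComb e m c (ζ j) = 0) (z : X) :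
    (vanMatrix e (Fin.snoc ζ z : Fin (m + 1) → X)).det =
      monicComb e m c z * (vanMatrix e ζ).det := by
  rw [det_vanMatrix_eq_sum_monicComb e c, Fin.sum_univ_castSucc]
  simp [hc, Fin.succAbove_last, ← two_mul]

theorem exists_monicComb_eq_zero {𝕜 : Type*} [Field 𝕜] {e : ℕ → X → 𝕜} {ζ : Fin m → X}
    (hD : (vanMatrix e ζ).det ≠ 0) : ∃ c : ℕ → 𝕜, ∀ j, monicComb e m c (ζ j) = 0 := by
  set a : Fin m → 𝕜 := -(fun j => e m (ζ j)) ᵥ* (vanMatrix e ζ)⁻¹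
  have ha : a ᵥ* vanMatrix e ζ = -(fun j => e m (ζ j)) := by
    rw [vecMul_vecMul, nonsing_inv_mul _ (isUnit_iff_ne_zero.mpr hD), vecMul_one]
  refine ⟨fun i => if h : i < m then a ⟨i, h⟩ else 0, fun j => ?_⟩
  have hj := congrFun ha j
  simp only [vecMul, dotProduct, vanMatrix, of_apply, Pi.neg_apply] at hj
  simp [monicComb, ← Fin.sum_univ_eq_sum_range, hj]

end Algebra

section Extremal

variable {K : Set X} {e : ℕ → X → ℂ} {m : ℕ}

theorem supNormOn_le {E : Type*} [Norm E] {p : X → E} {a : ℝ} (ha : 0 ≤ a)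
    (h : ∀ ζ ∈ K, ‖p ζ‖ ≤ a) : supNormOn K p ≤ a :=
  Real.sSup_le (by rintro _ ⟨ζ, hζ, rfl⟩; exact h ζ hζ) ha

theorem supNormOn_nonneg {E : Type*} [SeminormedAddGroup E] (p : X → E) : 0 ≤ supNormOn K p :=
  Real.sSup_nonneg <| by rintro _ ⟨ζ, -, rfl⟩; exact norm_nonneg _

theorem vanFam_eq_sSup_image (e : ℕ → X → ℂ) (K : Set X) (m : ℕ) :
    vanFam e K m = sSup ((fun ζ => ‖(vanMatrix e ζ).det‖) '' Set.univ.pi fun _ : Fin m => K) := by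
  rw [vanFam]
  congr 1
  ext x
  simp [vanMatrix, eq_comm]

theorem vanFam_nonneg : 0 ≤ vanFam e K m :=
  Real.sSup_nonneg <| by rintro _ ⟨ζ, -, rfl⟩; exact norm_nonneg _

theorem vanFam_le {a : ℝ} (ha : 0 ≤ a)
    (h : ∀ ζ : Fin m → X, (∀ i, ζ i ∈ K) → ‖(vanMatrix e ζ).det‖ ≤ a) : vanFam e K m ≤ a :=
  Real.sSup_le (by rintro _ ⟨ζ, hζ, rfl⟩; exact h ζ hζ) ha

theorem chebFam_succ_eq_iInf (e : ℕ → X → ℂ) (K : Set X) (m : ℕ) :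
    chebFam e K (m + 1) = ⨅ c, supNormOn K (monicComb e m c) := by
  rw [chebFam, iInf]
  congr 1
  ext x
  simp [supNormOn, monicComb, eq_comm]

theorem chebFam_succ_le (c : ℕ → ℂ) : chebFam e K (m + 1) ≤ supNormOn K (monicComb e m c) := by
  rw [chebFam_succ_eq_iInf]
  exact ciInf_le ⟨0, by rintro _ ⟨c, rfl⟩; exact supNormOn_nonneg _⟩ c

variable [TopologicalSpace X]

theorem norm_le_supNormOn {E : Type*} [SeminormedAddGroup E] (hK : IsCompact K) {p : X → E}
    (hp : Continuous p) {ζ : X} (hζ : ζ ∈ K) : ‖p ζ‖ ≤ supNormOn K p := by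
  have hset : {y | ∃ ζ ∈ K, y = ‖p ζ‖} = (fun ζ => ‖p ζ‖) '' K := by
    ext y; simp [eq_comm]
  rw [supNormOn, hset]
  exact le_csSup (hK.bddAbove_image hp.norm.continuousOn) ⟨ζ, hζ, rfl⟩

theorem continuous_monicComb {R : Type*} [CommRing R] [TopologicalSpace R] [IsTopologicalRing R]
    {e : ℕ → X → R} (he : ∀ i < m + 1, Continuous (e i)) (c : ℕ → R) :
    Continuous (monicComb e m c) :=
  (he m m.lt_succ_self).add <| continuous_finsetSum _ fun i hi =>
    continuous_const.mul (he i (by simp at hi; omega))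

theorem continuous_det_vanMatrix {R : Type*} [CommRing R] [TopologicalSpace R]
    [IsTopologicalRing R] {e : ℕ → X → R} (he : ∀ i < m, Continuous (e i)) :
    Continuous fun ζ : Fin m → X => (vanMatrix e ζ).det :=
  Continuous.matrix_det <| continuous_matrix fun i j => (he i i.2).comp (continuous_apply j)

theorem isCompact_image_norm_det_vanMatrix (hK : IsCompact K) (he : ∀ i < m, Continuous (e i)) :
    IsCompact ((fun ζ => ‖(vanMatrix e ζ).det‖) '' Set.univ.pi fun _ : Fin m => K) :=
  (isCompact_univ_pi fun _ => hK).image (continuous_det_vanMatrix he).norm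

theorem norm_det_le_vanFam (hK : IsCompact K) (he : ∀ i < m, Continuous (e i)) {ζ : Fin m → X}
    (hζ : ∀ i, ζ i ∈ K) : ‖(vanMatrix e ζ).det‖ ≤ vanFam e K m := by
  rw [vanFam_eq_sSup_image]
  exact le_csSup (isCompact_image_norm_det_vanMatrix hK he).bddAbove ⟨ζ, fun i _ => hζ i, rfl⟩

theorem exists_norm_det_eq_vanFam (hK : IsCompact K) (he : ∀ i < m, Continuous (e i))
    (hpos : 0 < vanFam e K m) :
    ∃ ζ : Fin m → X, (∀ i, ζ i ∈ K) ∧ ‖(vanMatrix e ζ).det‖ = vanFam e K m := by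
  rw [vanFam_eq_sSup_image] at hpos ⊢
  have hne : ((fun ζ => ‖(vanMatrix e ζ).det‖) '' Set.univ.pi fun _ : Fin m => K).Nonempty :=
    Set.nonempty_iff_ne_empty.mpr fun h => by simp [h] at hpos
  obtain ⟨ζ, hζ, hmax⟩ := (isCompact_image_norm_det_vanMatrix hK he).sSup_mem hne
  exact ⟨ζ, fun i => hζ i trivial, hmax⟩

theorem chebFam_mul_vanFam_le (hK : IsCompact K) (he : ∀ i < m + 1, Continuous (e i))
    (hpos : 0 < vanFam e K m) : chebFam e K (m + 1) * vanFam e K m ≤ vanFam e K (m + 1) := by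
  obtain ⟨ζ, hζK, hζ⟩ := exists_norm_det_eq_vanFam hK (fun i hi => he i (by omega)) hpos
  obtain ⟨c, hc⟩ := exists_monicComb_eq_zero (e := e) (ζ := ζ) <| by
    rw [← norm_ne_zero_iff, hζ]; exact hpos.ne'
  have hsup : supNormOn K (monicComb e m c) ≤ vanFam e K (m + 1) / vanFam e K m := by
    refine supNormOn_le (div_nonneg vanFam_nonneg hpos.le) fun z hz => ?_
    rw [le_div_iff₀ hpos, ← hζ, ← norm_mul, ← det_vanMatrix_snoc hc]
    refine norm_det_le_vanFam hK he fun i => ?_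
    induction i using Fin.lastCases <;> simp [hz, hζK]
  calc chebFam e K (m + 1) * vanFam e K m
      ≤ supNormOn K (monicComb e m c) * vanFam e K m := by gcongr; exact chebFam_succ_le c
    _ ≤ vanFam e K (m + 1) := (le_div_iff₀ hpos).mp hsup

theorem norm_det_vanMatrix_le (hK : IsCompact K) (he : ∀ i < m + 1, Continuous (e i))
    {ζ : Fin (m + 1) → X} (hζ : ∀ i, ζ i ∈ K) (c : ℕ → ℂ) :
    ‖(vanMatrix e ζ).det‖ ≤ (m + 1) * vanFam e K m * supNormOn K (monicComb e m c) := by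
  rw [det_vanMatrix_eq_sum_monicComb e c]
  calc _ ≤ ∑ j : Fin (m + 1), supNormOn K (monicComb e m c) * vanFam e K m := by
        refine (norm_sum_le _ _).trans <| sum_le_sum fun j _ => ?_
        rw [norm_mul, norm_mul, norm_pow, norm_neg, norm_one, one_pow, one_mul]
        exact mul_le_mul (norm_le_supNormOn hK (continuous_monicComb he c) (hζ j))
          (norm_det_le_vanFam hK (fun i hi => he i (by omega)) fun i => hζ _)
          (norm_nonneg _) (supNormOn_nonneg _)
    _ = _ := by simp; ring

theorem vanFam_succ_le (hK : IsCompact K) (he : ∀ i < m + 1, Continuous (e i)) :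
    vanFam e K (m + 1) ≤ (m + 1) * chebFam e K (m + 1) * vanFam e K m := by
  have hcoef : (0 : ℝ) ≤ (m + 1) * vanFam e K m := by
    have := vanFam_nonneg (e := e) (K := K) (m := m); positivity
  rw [mul_right_comm, chebFam_succ_eq_iInf, Real.mul_iInf_of_nonneg hcoef]
  exact vanFam_le (Real.iInf_nonneg fun _ => mul_nonneg hcoef (supNormOn_nonneg _))
    fun ζ hζ => le_ciInf (norm_det_vanMatrix_le hK he hζ)

end Extremal

end VandermondeChebyshev

theorem vandermonde_chebyshev_ratio_general {X : Type*} [TopologicalSpace X]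
    (n : ℕ) (hn : 1 ≤ n) (e : ℕ → X → ℂ) (he : ∀ i < n, Continuous (e i))
    (K : Set X) (hK : IsCompact K)
    (hpos : 0 < vanFam e K (n - 1)) :
    chebFam e K n * vanFam e K (n - 1) ≤ vanFam e K n ∧
      vanFam e K n ≤ (n : ℝ) * chebFam e K n * vanFam e K (n - 1) := by
  obtain ⟨m, rfl⟩ : ∃ m, n = m + 1 := ⟨n - 1, by omega⟩
  simp only [Nat.add_sub_cancel, Nat.cast_add, Nat.cast_one] at hpos ⊢
  exact ⟨chebFam_mul_vanFam_le hK he hpos, vanFam_succ_le hK he⟩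

/-- The Vandermonde–Chebyshev ratio inequality: if `Van_{n-1}(K) > 0` then
`t_n(K) · Van_{n-1}(K) ≤ Van_n(K) ≤ n · t_n(K) · Van_{n-1}(K)`. -/
theorem vandermonde_chebyshev_ratio {X : Type*} [TopologicalSpace X]
    (n : ℕ) (hn : 1 ≤ n) (e : ℕ → X → ℂ) (he : ∀ i < n, Continuous (e i))
    (K : Set X) (hK : IsCompact K) (hne : K.Nonempty)
    (hpos : 0 < vanFam e K (n - 1)) :
    chebFam e K n * vanFam e K (n - 1) ≤ vanFam e K n ∧
      vanFam e K n ≤ (n : ℝ) * chebFam e K n * vanFam e K (n - 1) :=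
  vandermonde_chebyshev_ratio_general n hn e he K hK hpos

end
end
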